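/- arXiv:2511.12059 — 5 statements merged into one kernel-verified Lean document; each statement's English description precedes it below -/
import Mathlib

section
/- Let u, v, w be points in the Euclidean plane ℝ² such that u − v and w − v are linearly independent, and let α = ∠uvw be the undirected angle at v between u − v and w − v. Then the Lebesgue measure of the set {t ∈ [0, 2π) : (cos t)·(u − v)₁ + (sin t)·(u − v)₂ < 0 and (cos t)·(w − v)₁ + (sin t)·(w − v)₂ < 0} equals π − α. Equivalently, the set of angles t whose direction s = (cos t, sin t) sees v as a strict local maximum over its neighbors u and w is an arc of angular measure π − ∠uvw. -/
open Real MeasureTheory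

private lemma cosNegIff1 {x : ℝ} (h1 : -(π/2) ≤ x) (h2 : x ≤ 5*(π/2)) :
    Real.cos x < 0 ↔ π/2 < x ∧ x < 3*(π/2) := by
  constructor
  · intro hc
    constructor
    · by_contra hle; push_neg at hle
      exact absurd (Real.cos_nonneg_of_mem_Icc ⟨h1, hle⟩) (not_le.2 hc)
    · by_contra hle; push_neg at hle
      have h3 : 0 ≤ Real.cos (x - 2*π) :=
        Real.cos_nonneg_of_mem_Icc ⟨by linarith, by linarith⟩
      rw [Real.cos_sub_two_pi] at h3; linarith
  · rintro ⟨h3, h4⟩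
    exact Real.cos_neg_of_pi_div_two_lt_of_lt h3 (by linarith)

private lemma cosNegIff2 {x : ℝ} (h1 : π/2 < x) (h2 : x < 7*(π/2)) :
    Real.cos x < 0 ↔ x < 3*(π/2) ∨ 5*(π/2) < x := by
  rcases le_or_gt x (5*(π/2)) with hx | hx
  · rw [cosNegIff1 (by linarith) hx]
    constructor
    · rintro ⟨-, h⟩; exact Or.inl h
    · rintro (h | h)
      · exact ⟨h1, h⟩
      · exact absurd h (by linarith)
  · rw [show x = (x - 2*π) + 2*π by ring, Real.cos_add_two_pi,
      cosNegIff1 (by linarith) (by linarith)]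
    constructor
    · rintro ⟨h, -⟩; right; linarith
    · rintro (h | h)
      · exact absurd h (by linarith)
      · exact ⟨by linarith, by linarith⟩

set_option maxHeartbeats 1000000 in
/-- The set of angles `t ∈ [0, 2π)` whose direction `(cos t, sin t)` sees the
degree-two vertex `v` (with neighbors `u` and `w`) as a strict local maximum
has Lebesgue measure `π - ∠uvw`. -/
theorem measure_localMax_directions_eq
    (u v w : EuclideanSpace ℝ (Fin 2))
    (h : LinearIndependent ℝ ![u - v, w - v]) :
    volume {t : ℝ | t ∈ Set.Ico 0 (2 * π) ∧
        Real.cos t * (u - v) 0 + Real.sin t * (u - v) 1 < 0 ∧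
        Real.cos t * (w - v) 0 + Real.sin t * (w - v) 1 < 0} =
      ENNReal.ofReal (π - EuclideanGeometry.angle u v w) := by
  -- nonvanishing of the two vectors
  have hane : u - v ≠ 0 := by
    have := h.ne_zero 0; simpa using this
  have hbne : w - v ≠ 0 := by
    have := h.ne_zero 1; simpa using this
  -- complex representatives
  set za : ℂ := ⟨(u - v) 0, (u - v) 1⟩ with hza_def
  set zb : ℂ := ⟨(w - v) 0, (w - v) 1⟩ with hzb_def
  have hza : za ≠ 0 := by
    intro hz
    exact hane (by
      ext i
      have h0 : (u - v) 0 = 0 := congrArg Complex.re hz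
      have h1 : (u - v) 1 = 0 := congrArg Complex.im hz
      fin_cases i <;> assumption)
  have hzb : zb ≠ 0 := by
    intro hz
    exact hbne (by
      ext i
      have h0 : (w - v) 0 = 0 := congrArg Complex.re hz
      have h1 : (w - v) 1 = 0 := congrArg Complex.im hz
      fin_cases i <;> assumption)
  set ra : ℝ := ‖za‖ with hra_def
  set rb : ℝ := ‖zb‖ with hrb_def
  have hra : 0 < ra := norm_pos_iff.mpr hza
  have hrb : 0 < rb := norm_pos_iff.mpr hzb
  set θa : ℝ := Complex.arg za with hθa_def
  set θb : ℝ := Complex.arg zb with hθb_def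
  have ha0 : (u - v) 0 = ra * Real.cos θa := by
    rw [hθa_def, Complex.cos_arg hza]
    field_simp [hra_def]
    exact mul_comm _ _
  have ha1 : (u - v) 1 = ra * Real.sin θa := by
    rw [hθa_def, Complex.sin_arg]
    field_simp [hra_def]
    exact mul_comm _ _
  have hb0 : (w - v) 0 = rb * Real.cos θb := by
    rw [hθb_def, Complex.cos_arg hzb]
    field_simp [hrb_def]
    exact mul_comm _ _
  have hb1 : (w - v) 1 = rb * Real.sin θb := by
    rw [hθb_def, Complex.sin_arg]
    field_simp [hrb_def]
    exact mul_comm _ _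
  have hna : ‖u - v‖ = ra := by
    rw [EuclideanSpace.norm_eq, hra_def, Complex.norm_def, Complex.normSq_mk]
    simp [Fin.sum_univ_two, Real.norm_eq_abs, sq_abs]
    ring_nf
  have hnb : ‖w - v‖ = rb := by
    rw [EuclideanSpace.norm_eq, hrb_def, Complex.norm_def, Complex.normSq_mk]
    simp [Fin.sum_univ_two, Real.norm_eq_abs, sq_abs]
    ring_nf
  -- angle of the two args
  set δ : ℝ := θb - θa with hδ_def
  have hθaI : -π < θa := Complex.neg_pi_lt_arg za
  have hθaI' : θa ≤ π := Complex.arg_le_pi za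
  have hθbI : -π < θb := Complex.neg_pi_lt_arg zb
  have hθbI' : θb ≤ π := Complex.arg_le_pi zb
  set δ₀ : ℝ := if π < δ then δ - 2*π else if δ ≤ -π then δ + 2*π else δ with hδ₀_def
  have hδ₀mem : -π < δ₀ ∧ δ₀ ≤ π := by
    rw [hδ₀_def]
    split_ifs with h1 h2 <;> (try push_neg at *) <;>
      constructor <;> linarith [Real.pi_pos]
  have hcosδ : Real.cos δ₀ = Real.cos δ := by
    rw [hδ₀_def]
    split_ifs with h1 h2
    · exact Real.cos_sub_two_pi δ
    · exact Real.cos_add_two_pi δ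
    · rfl
  have hcosb : ∀ t : ℝ, Real.cos (t - θb) = Real.cos (t - θa - δ₀) := by
    intro t
    rw [hδ₀_def]
    split_ifs with h1 h2
    · rw [show t - θa - (δ - 2*π) = (t - θb) + 2*π by rw [hδ_def]; ring,
        Real.cos_add_two_pi]
    · rw [show t - θa - (δ + 2*π) = (t - θb) - 2*π by rw [hδ_def]; ring,
        Real.cos_sub_two_pi]
    · rw [show t - θa - δ = t - θb by rw [hδ_def]; ring]
  -- the angle equals arccos (cos δ₀)
  have hangle : EuclideanGeometry.angle u v w = Real.arccos (Real.cos δ₀) := by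
    rw [EuclideanGeometry.angle, InnerProductGeometry.angle]
    simp only [vsub_eq_sub]
    congr 1
    have hinner : (inner ℝ (u - v) (w - v) : ℝ) = (u - v) 0 * (w - v) 0 + (u - v) 1 * (w - v) 1 := by
      simp [PiLp.inner_apply, Fin.sum_univ_two, RCLike.inner_apply, mul_comm]
    rw [hinner, hna, hnb, ha0, ha1, hb0, hb1, hcosδ,
      show δ = -(θa - θb) by rw [hδ_def]; ring, Real.cos_neg, Real.cos_sub]
    field_simp
  -- the angle is strictly between 0 and π
  have hnotdep : ∀ r : ℝ, w - v ≠ r • (u - v) := by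
    intro r hr
    have h2 := (LinearIndependent.pair_iff.mp h) r (-1)
      (by rw [hr]; simp)
    exact absurd h2.2 (by norm_num)
  have hα0 : EuclideanGeometry.angle u v w ≠ 0 := by
    intro h0
    rw [EuclideanGeometry.angle] at h0
    obtain ⟨-, r, -, hr⟩ := InnerProductGeometry.angle_eq_zero_iff.mp h0
    simp only [vsub_eq_sub] at hr
    exact hnotdep r hr
  have hαπ : EuclideanGeometry.angle u v w ≠ π := by
    intro h0
    rw [EuclideanGeometry.angle] at h0
    obtain ⟨-, r, -, hr⟩ := InnerProductGeometry.angle_eq_pi_iff.mp h0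
    simp only [vsub_eq_sub] at hr
    exact hnotdep r hr
  have hα : EuclideanGeometry.angle u v w = |δ₀| := by
    rw [hangle]
    rcases le_or_gt 0 δ₀ with hd | hd
    · rw [Real.arccos_cos hd hδ₀mem.2, abs_of_nonneg hd]
    · rw [← Real.cos_neg, Real.arccos_cos (by linarith) (by linarith [hδ₀mem.1]),
        abs_of_neg hd]
  have hδ₀ne : δ₀ ≠ 0 := by
    intro h0; exact hα0 (by rw [hα, h0, abs_zero])
  have hδ₀lt : |δ₀| < π := by
    rcases lt_or_eq_of_le (abs_le.mpr ⟨by linarith [hδ₀mem.1], hδ₀mem.2⟩) with h' | h'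
    · exact h'
    · exact absurd (hα.trans h') hαπ
  have hδ₀lt' : δ₀ < π := lt_of_le_of_lt (le_abs_self δ₀) hδ₀lt
  have hδ₀gt : -π < δ₀ := by
    have := abs_lt.mp hδ₀lt; linarith [this.1]
  -- rewrite the set
  set A : Set ℝ := {t : ℝ | Real.cos (t - θa) < 0 ∧ Real.cos (t - θa - δ₀) < 0} with hA_def
  have hiff1 : ∀ t : ℝ,
      (Real.cos t * (u - v) 0 + Real.sin t * (u - v) 1 < 0 ↔ Real.cos (t - θa) < 0) := by
    intro t
    rw [ha0, ha1, show Real.cos t * (ra * Real.cos θa) + Real.sin t * (ra * Real.sin θa)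
        = ra * Real.cos (t - θa) by rw [Real.cos_sub]; ring]
    constructor
    · intro h'; nlinarith
    · intro h'; exact mul_neg_of_pos_of_neg hra h'
  have hiff2 : ∀ t : ℝ,
      (Real.cos t * (w - v) 0 + Real.sin t * (w - v) 1 < 0 ↔
        Real.cos (t - θa - δ₀) < 0) := by
    intro t
    rw [hb0, hb1, show Real.cos t * (rb * Real.cos θb) + Real.sin t * (rb * Real.sin θb)
        = rb * Real.cos (t - θb) by rw [Real.cos_sub]; ring, hcosb t]
    constructor
    · intro h'; nlinarith
    · intro h'; exact mul_neg_of_pos_of_neg hrb h'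
  have hset : {t : ℝ | t ∈ Set.Ico 0 (2 * π) ∧
        Real.cos t * (u - v) 0 + Real.sin t * (u - v) 1 < 0 ∧
        Real.cos t * (w - v) 0 + Real.sin t * (w - v) 1 < 0}
      = Set.Ico 0 (2 * π) ∩ A := by
    ext t
    simp only [Set.mem_setOf_eq, Set.mem_inter_iff, hA_def, hiff1 t, hiff2 t]
  rw [hset]
  -- measurability and periodicity of A
  have hmeasA : MeasurableSet A := by
    have : A = ((fun t => Real.cos (t - θa)) ⁻¹' Set.Iio 0) ∩
        ((fun t => Real.cos (t - θa - δ₀)) ⁻¹' Set.Iio 0) := rfl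
    rw [this]
    exact (((Real.continuous_cos.comp (continuous_id.sub continuous_const)).measurable
        measurableSet_Iio)).inter
      (((Real.continuous_cos.comp ((continuous_id.sub continuous_const).sub
        continuous_const)).measurable measurableSet_Iio))
  have hinv : ∀ g : AddSubgroup.zmultiples (2 * π),
      (fun x : ℝ => g +ᵥ x) ⁻¹' A = A := by
    intro g
    obtain ⟨n, hn⟩ := AddSubgroup.mem_zmultiples_iff.mp g.2
    ext x
    have e0 : (g +ᵥ x : ℝ) = x + (n : ℝ) * (2 * π) := by
      rw [show (g +ᵥ x : ℝ) = ↑g + x from rfl, ← hn]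
      push_cast [zsmul_eq_mul]; ring
    have c1 : Real.cos (x + (n : ℝ) * (2 * π) - θa) = Real.cos (x - θa) := by
      rw [show x + (n : ℝ) * (2 * π) - θa = (x - θa) + (n : ℝ) * (2 * π) by ring,
        Real.cos_add_int_mul_two_pi]
    have c2 : Real.cos (x + (n : ℝ) * (2 * π) - θa - δ₀)
        = Real.cos (x - θa - δ₀) := by
      rw [show x + (n : ℝ) * (2 * π) - θa - δ₀ = (x - θa - δ₀) + (n : ℝ) * (2 * π) by ring,
        Real.cos_add_int_mul_two_pi]
    simp only [Set.mem_preimage, hA_def, Set.mem_setOf_eq, e0, c1, c2]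
  -- replace Ico by Ioc and shift the fundamental domain
  set L : ℝ := θa + π/2 with hL_def
  have h2π : (0 : ℝ) < 2 * π := Real.two_pi_pos
  have step1 : volume (Set.Ico 0 (2 * π) ∩ A) = volume (A ∩ Set.Ioc 0 (0 + 2 * π)) := by
    rw [Set.inter_comm, zero_add]
    exact measure_congr (ae_eq_set_inter (ae_eq_refl A) Ico_ae_eq_Ioc)
  have step2 : volume (A ∩ Set.Ioc 0 (0 + 2 * π)) = volume (A ∩ Set.Ioc L (L + 2 * π)) :=
    (isAddFundamentalDomain_Ioc h2π 0).measure_set_eq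
      (isAddFundamentalDomain_Ioc h2π L) hmeasA hinv
  rw [step1, step2]
  -- compute the resulting arc
  rcases lt_or_gt_of_ne hδ₀ne with hneg | hpos
  · -- δ₀ < 0 : the set is Ioo L (θa + δ₀ + 3π/2)
    have hEq : A ∩ Set.Ioc L (L + 2 * π) = Set.Ioo L (θa + δ₀ + 3*(π/2)) := by
      ext t
      simp only [hA_def, Set.mem_inter_iff, Set.mem_setOf_eq, Set.mem_Ioc, Set.mem_Ioo, hL_def]
      constructor
      · rintro ⟨⟨hc1, hc2⟩, hl, hr⟩
        have h1 := (cosNegIff1 (x := t - θa) (by linarith) (by linarith)).mp hc1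
        have h2 := (cosNegIff2 (x := t - θa - δ₀) (by linarith) (by linarith [h1.2])).mp hc2
        rcases h2 with h2 | h2
        · exact ⟨by linarith, by linarith⟩
        · exact absurd h1.2 (by linarith)
      · rintro ⟨hl, hr⟩
        refine ⟨⟨?_, ?_⟩, by linarith, by linarith⟩
        · exact (cosNegIff1 (by linarith) (by linarith)).mpr ⟨by linarith, by linarith⟩
        · exact (cosNegIff1 (by linarith) (by linarith)).mpr ⟨by linarith, by linarith⟩
    rw [hEq, Real.volume_Ioo, hα, abs_of_neg hneg]
    congr 1
    rw [hL_def]; ring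
  · -- δ₀ > 0 : the set is Ioo (θa + δ₀ + π/2) (θa + 3π/2)
    have hEq : A ∩ Set.Ioc L (L + 2 * π) = Set.Ioo (θa + δ₀ + π/2) (θa + 3*(π/2)) := by
      ext t
      simp only [hA_def, Set.mem_inter_iff, Set.mem_setOf_eq, Set.mem_Ioc, Set.mem_Ioo, hL_def]
      constructor
      · rintro ⟨⟨hc1, hc2⟩, hl, hr⟩
        have h1 := (cosNegIff1 (x := t - θa) (by linarith) (by linarith)).mp hc1
        have h2 := (cosNegIff1 (x := t - θa - δ₀) (by linarith) (by linarith)).mp hc2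
        exact ⟨by linarith [h2.1], by linarith [h1.2]⟩
      · rintro ⟨hl, hr⟩
        refine ⟨⟨?_, ?_⟩, by linarith, by linarith⟩
        · exact (cosNegIff1 (by linarith) (by linarith)).mpr ⟨by linarith, by linarith⟩
        · exact (cosNegIff1 (by linarith) (by linarith)).mpr ⟨by linarith, by linarith⟩
    rw [hEq, Real.volume_Ioo, hα, abs_of_pos hpos]
    congr 1
    ring
end

section
/- Let u, v, w be points in the Euclidean plane ℝ² such that u − v and w − v are linearly independent, and let α = ∠uvw. Then the Lebesgue measure of the set {t ∈ [0, 2π) : the direction s = (cos t, sin t) satisfies either (s·u < s·v and s·w < s·v) or (s·u > s·v and s·w > s·v)} equals 2(π − α). That is, the observing region of the degree-two vertex v with neighbors u and w has total angular measure 2(π − ∠uvw), which tends to 0 as the triangle flattens (α → π). -/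
open Real MeasureTheory Set


/-- Measures of intersections with `Ico` and `Ioc` agree. -/
lemma aux_ico_ioc (A : Set ℝ) (a b : ℝ) :
    volume (A ∩ Set.Ico a b) = volume (A ∩ Set.Ioc a b) := by
  apply le_antisymm
  · calc volume (A ∩ Set.Ico a b) ≤ volume ((A ∩ Set.Ioc a b) ∪ {a}) := by
          apply measure_mono
          rintro x ⟨hA, hx1, hx2⟩
          rcases eq_or_lt_of_le hx1 with rfl | h'
          · exact Or.inr rfl
          · exact Or.inl ⟨hA, h', hx2.le⟩
        _ ≤ volume (A ∩ Set.Ioc a b) + volume {a} := measure_union_le _ _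
        _ = volume (A ∩ Set.Ioc a b) := by simp
  · calc volume (A ∩ Set.Ioc a b) ≤ volume ((A ∩ Set.Ico a b) ∪ {b}) := by
          apply measure_mono
          rintro x ⟨hA, hx1, hx2⟩
          rcases eq_or_lt_of_le hx2 with rfl | h'
          · exact Or.inr rfl
          · exact Or.inl ⟨hA, hx1.le, h'⟩
        _ ≤ volume (A ∩ Set.Ico a b) + volume {b} := measure_union_le _ _
        _ = volume (A ∩ Set.Ico a b) := by simp

/-- A `2π`-periodic set has the same measure in every period window. -/
lemma aux_periodic_Ioc (B : Set ℝ) (hB : MeasurableSet B)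
    (hper : ∀ (k : ℤ) (y : ℝ), ((k : ℝ) * (2 * π) + y ∈ B ↔ y ∈ B)) (a b : ℝ) :
    volume (B ∩ Set.Ioc a (a + 2 * π)) = volume (B ∩ Set.Ioc b (b + 2 * π)) := by
  have h2π : 0 < 2 * π := by positivity
  refine MeasureTheory.IsAddFundamentalDomain.measure_set_eq
    (isAddFundamentalDomain_Ioc h2π a) (isAddFundamentalDomain_Ioc h2π b) hB ?_
  intro g
  obtain ⟨k, hk⟩ := AddSubgroup.mem_zmultiples_iff.mp g.2
  ext y
  have : (g : ℝ) = (k : ℝ) * (2 * π) := by rw [← hk, zsmul_eq_mul]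
  simp only [Set.mem_preimage, AddSubgroup.vadd_def, vadd_eq_add, this]
  exact hper k y

lemma aux_slice {β : ℝ} (hβ0 : 0 ≤ β) (hβπ : β ≤ π) :
    {y : ℝ | Real.cos β < Real.cos y} ∩ Set.Ioc (-π) π = Set.Ioo (-β) β := by
  ext y
  simp only [Set.mem_inter_iff, Set.mem_setOf_eq, Set.mem_Ioc, Set.mem_Ioo]
  constructor
  · rintro ⟨hcy, hy1, hy2⟩
    by_contra hcon
    push_neg at hcon
    have habs : β ≤ |y| := by
      rcases le_or_gt y (-β) with h' | h'
      · calc β ≤ -y := by linarith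
          _ ≤ |y| := (neg_le_abs y)
      · calc β ≤ y := hcon h'
          _ ≤ |y| := le_abs_self y
    have : Real.cos y ≤ Real.cos β := by
      rw [← Real.cos_abs y]
      rcases eq_or_lt_of_le habs with h'' | h''
      · rw [h'']
      · exact (Real.cos_lt_cos_of_nonneg_of_le_pi hβ0 (abs_le.mpr ⟨by linarith, hy2⟩) h'').le
    linarith
  · rintro ⟨hy1, hy2⟩
    have hyπ : |y| < β := abs_lt.mpr ⟨hy1, hy2⟩
    refine ⟨?_, by linarith [abs_lt.mp (lt_of_lt_of_le hyπ hβπ) ], by linarith [abs_lt.mp (lt_of_lt_of_le hyπ hβπ)]⟩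
    rw [← Real.cos_abs y]
    exact Real.cos_lt_cos_of_nonneg_of_le_pi (abs_nonneg y) hβπ hyπ

lemma aux_key (β c : ℝ) (hβ0 : 0 ≤ β) (hβπ : β ≤ π) :
    volume {t : ℝ | t ∈ Set.Ico 0 (2 * π) ∧ Real.cos β < Real.cos (2 * t - c)} =
      ENNReal.ofReal (2 * β) := by
  set B : Set ℝ := {y : ℝ | Real.cos β < Real.cos y} with hBdef
  have hBmeas : MeasurableSet B := measurableSet_lt measurable_const Real.continuous_cos.measurable
  have hper : ∀ (k : ℤ) (y : ℝ), ((k : ℝ) * (2 * π) + y ∈ B ↔ y ∈ B) := by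
    intro k y
    simp only [hBdef, Set.mem_setOf_eq]
    rw [show (k : ℝ) * (2 * π) + y = y + (k : ℝ) * (2 * π) by ring, Real.cos_add_int_mul_two_pi]
  -- the single window measure
  have hwin : ∀ x : ℝ, volume (B ∩ Set.Ioc x (x + 2 * π)) = ENNReal.ofReal (2 * β) := by
    intro x
    rw [aux_periodic_Ioc B hBmeas hper x (-π)]
    have : -π + 2 * π = π := by ring
    rw [this, aux_slice hβ0 hβπ, Real.volume_Ioo]
    congr 1
    ring
  -- change of variables
  have hset : {t : ℝ | t ∈ Set.Ico 0 (2 * π) ∧ Real.cos β < Real.cos (2 * t - c)} =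
      (fun t : ℝ => (2 : ℝ) * t) ⁻¹' ((fun y : ℝ => -c + y) ⁻¹' (B ∩ Set.Ico (-c) (-c + 4 * π))) := by
    ext t
    simp only [Set.mem_setOf_eq, Set.mem_preimage, Set.mem_inter_iff, Set.mem_Ico, hBdef]
    constructor
    · rintro ⟨⟨h1, h2⟩, h3⟩
      exact ⟨by rw [show -c + 2 * t = 2 * t - c by ring]; exact h3, by linarith, by linarith⟩
    · rintro ⟨h3, h1, h2⟩
      rw [show -c + 2 * t = 2 * t - c by ring] at h3
      exact ⟨⟨by linarith, by linarith⟩, h3⟩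
  have hS : volume (B ∩ Set.Ico (-c) (-c + 4 * π)) = ENNReal.ofReal (4 * β) := by
    have hsplit : Set.Ico (-c) (-c + 4 * π) = Set.Ico (-c) (-c + 2 * π) ∪ Set.Ico (-c + 2 * π) (-c + 4 * π) :=
      (Set.Ico_union_Ico_eq_Ico (by linarith [Real.pi_pos]) (by linarith [Real.pi_pos])).symm
    have hdisj : Disjoint (B ∩ Set.Ico (-c) (-c + 2 * π)) (B ∩ Set.Ico (-c + 2 * π) (-c + 4 * π)) :=
      Disjoint.mono Set.inter_subset_right Set.inter_subset_right
        (Set.Ico_disjoint_Ico_same)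
    rw [hsplit, Set.inter_union_distrib_left,
      measure_union hdisj (hBmeas.inter measurableSet_Ico),
      aux_ico_ioc, aux_ico_ioc,
      show (-c + 4 * π : ℝ) = (-c + 2 * π) + 2 * π by ring, hwin, hwin,
      ← ENNReal.ofReal_add (by linarith) (by linarith)]
    congr 1
    ring
  rw [hset]
  have hSmeas : MeasurableSet ((fun y : ℝ => -c + y) ⁻¹' (B ∩ Set.Ico (-c) (-c + 4 * π))) :=
    (hBmeas.inter measurableSet_Ico).preimage (measurable_const_add _)
  rw [Real.volume_preimage_mul_left (two_ne_zero) _,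
    measure_preimage_add volume (-c) _, hS, ← ENNReal.ofReal_mul (by positivity)]
  congr 1
  rw [abs_of_pos (by norm_num : (0:ℝ) < 2⁻¹)]
  ring
/-- The observing region of a degree-two vertex `v` with neighbors `u` and `w`
(directions seeing `v` as a strict local max or min), parameterized by the
angle `t ∈ [0, 2π)` via `s = (cos t, sin t)`, has Lebesgue measure
`2(π - ∠uvw)`. -/
theorem measure_observing_region_eq
    (u v w : EuclideanSpace ℝ (Fin 2))
    (h : LinearIndependent ℝ ![u - v, w - v]) :
    volume {t : ℝ | t ∈ Set.Ico 0 (2 * π) ∧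
        ((Real.cos t * u 0 + Real.sin t * u 1 < Real.cos t * v 0 + Real.sin t * v 1 ∧
          Real.cos t * w 0 + Real.sin t * w 1 < Real.cos t * v 0 + Real.sin t * v 1) ∨
         (Real.cos t * u 0 + Real.sin t * u 1 > Real.cos t * v 0 + Real.sin t * v 1 ∧
          Real.cos t * w 0 + Real.sin t * w 1 > Real.cos t * v 0 + Real.sin t * v 1))} =
      ENNReal.ofReal (2 * (π - EuclideanGeometry.angle u v w)) := by
  obtain ⟨α, hα⟩ : ∃ x : ℝ, x = EuclideanGeometry.angle u v w := ⟨_, rfl⟩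
  obtain ⟨a0, ha0⟩ : ∃ x : ℝ, x = u 0 - v 0 := ⟨_, rfl⟩
  obtain ⟨a1, ha1⟩ : ∃ x : ℝ, x = u 1 - v 1 := ⟨_, rfl⟩
  obtain ⟨b0, hb0⟩ : ∃ x : ℝ, x = w 0 - v 0 := ⟨_, rfl⟩
  obtain ⟨b1, hb1⟩ : ∃ x : ℝ, x = w 1 - v 1 := ⟨_, rfl⟩
  -- nonvanishing
  have hane : u - v ≠ 0 := by simpa using h.ne_zero 0
  have hbne : w - v ≠ 0 := by simpa using h.ne_zero 1
  have hna : 0 < a0 ^ 2 + a1 ^ 2 := by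
    rcases lt_or_eq_of_le (by positivity : (0:ℝ) ≤ a0 ^ 2 + a1 ^ 2) with h' | h'
    · exact h'
    · exfalso
      apply hane
      have h0 : a0 = 0 := by nlinarith [sq_nonneg a0, sq_nonneg a1]
      have h1 : a1 = 0 := by nlinarith [sq_nonneg a0, sq_nonneg a1]
      rw [ha0] at h0; rw [ha1] at h1
      ext i
      simp only [WithLp.ofLp_sub, WithLp.ofLp_zero, Pi.sub_apply, Pi.zero_apply]
      fin_cases i
      · exact sub_eq_zero.mpr (sub_eq_zero.mp h0)
      · exact sub_eq_zero.mpr (sub_eq_zero.mp h1)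
  have hnb : 0 < b0 ^ 2 + b1 ^ 2 := by
    rcases lt_or_eq_of_le (by positivity : (0:ℝ) ≤ b0 ^ 2 + b1 ^ 2) with h' | h'
    · exact h'
    · exfalso
      apply hbne
      have h0 : b0 = 0 := by nlinarith [sq_nonneg b0, sq_nonneg b1]
      have h1 : b1 = 0 := by nlinarith [sq_nonneg b0, sq_nonneg b1]
      rw [hb0] at h0; rw [hb1] at h1
      ext i
      simp only [WithLp.ofLp_sub, WithLp.ofLp_zero, Pi.sub_apply, Pi.zero_apply]
      fin_cases i
      · exact sub_eq_zero.mpr (sub_eq_zero.mp h0)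
      · exact sub_eq_zero.mpr (sub_eq_zero.mp h1)
  -- the phase
  obtain ⟨p, hp⟩ : ∃ x : ℝ, x = (a0 * b0 - a1 * b1) / 2 := ⟨_, rfl⟩
  obtain ⟨q, hq⟩ : ∃ x : ℝ, x = (a0 * b1 + a1 * b0) / 2 := ⟨_, rfl⟩
  have hpq : p ^ 2 + q ^ 2 = (a0 ^ 2 + a1 ^ 2) * (b0 ^ 2 + b1 ^ 2) / 4 := by
    rw [hp, hq]; ring
  have hz : (⟨p, q⟩ : ℂ) ≠ 0 := by
    intro h0
    rw [Complex.ext_iff] at h0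
    simp only [Complex.zero_re, Complex.zero_im] at h0
    rw [h0.1, h0.2] at hpq
    nlinarith [hna, hnb, hpq]
  obtain ⟨r, hrdef⟩ : ∃ x : ℝ, x = ‖(⟨p, q⟩ : ℂ)‖ := ⟨_, rfl⟩
  have hrpos : 0 < r := hrdef ▸ norm_pos_iff.mpr hz
  have hr2 : r ^ 2 = (a0 ^ 2 + a1 ^ 2) * (b0 ^ 2 + b1 ^ 2) / 4 := by
    rw [hrdef, Complex.sq_norm, Complex.normSq_mk, ← hpq]; ring
  obtain ⟨c, hcdef⟩ : ∃ x : ℝ, x = Complex.arg ⟨p, q⟩ := ⟨_, rfl⟩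
  have hcc : r * Real.cos c = p := by
    rw [hcdef, Complex.cos_arg hz, hrdef]
    rw [mul_div_cancel₀ _ (norm_ne_zero_iff.mpr hz)]
  have hss : r * Real.sin c = q := by
    rw [hcdef, Complex.sin_arg, hrdef]
    rw [mul_div_cancel₀ _ (norm_ne_zero_iff.mpr hz)]
  -- norms and angle
  have hnorm : ‖u - v‖ * ‖w - v‖ = 2 * r := by
    have h1 : ‖u - v‖ = Real.sqrt (a0 ^ 2 + a1 ^ 2) := by
      rw [EuclideanSpace.norm_eq, ha0, ha1]
      congr 1
      rw [Fin.sum_univ_two]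
      simp [Real.norm_eq_abs, sq_abs]
    have h2 : ‖w - v‖ = Real.sqrt (b0 ^ 2 + b1 ^ 2) := by
      rw [EuclideanSpace.norm_eq, hb0, hb1]
      congr 1
      rw [Fin.sum_univ_two]
      simp [Real.norm_eq_abs, sq_abs]
    rw [h1, h2, ← Real.sqrt_mul hna.le]
    rw [show (a0 ^ 2 + a1 ^ 2) * (b0 ^ 2 + b1 ^ 2) = (2 * r) ^ 2 by linear_combination -4 * hr2]
    exact Real.sqrt_sq (by positivity)
  have hinner : (inner ℝ (u - v) (w - v) : ℝ) = a0 * b0 + a1 * b1 := by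
    rw [PiLp.inner_apply, Fin.sum_univ_two, ha0, ha1, hb0, hb1]
    simp [RCLike.inner_apply, mul_comm]
  have hcosα : Real.cos α * (2 * r) = a0 * b0 + a1 * b1 := by
    rw [hα, EuclideanGeometry.angle, ← hnorm, vsub_eq_sub, vsub_eq_sub,
      InnerProductGeometry.cos_angle_mul_norm_mul_norm, hinner]
  -- rewrite the set
  have hseteq : {t : ℝ | t ∈ Set.Ico 0 (2 * π) ∧
        ((Real.cos t * u 0 + Real.sin t * u 1 < Real.cos t * v 0 + Real.sin t * v 1 ∧
          Real.cos t * w 0 + Real.sin t * w 1 < Real.cos t * v 0 + Real.sin t * v 1) ∨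
         (Real.cos t * u 0 + Real.sin t * u 1 > Real.cos t * v 0 + Real.sin t * v 1 ∧
          Real.cos t * w 0 + Real.sin t * w 1 > Real.cos t * v 0 + Real.sin t * v 1))} =
      {t : ℝ | t ∈ Set.Ico 0 (2 * π) ∧ Real.cos (π - α) < Real.cos (2 * t - c)} := by
    ext t
    simp only [Set.mem_setOf_eq]
    refine and_congr_right fun _ => ?_
    have hAe : Real.cos t * a0 + Real.sin t * a1 =
        (Real.cos t * u 0 + Real.sin t * u 1) - (Real.cos t * v 0 + Real.sin t * v 1) := by
      rw [ha0, ha1]; ring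
    have hBe : Real.cos t * b0 + Real.sin t * b1 =
        (Real.cos t * w 0 + Real.sin t * w 1) - (Real.cos t * v 0 + Real.sin t * v 1) := by
      rw [hb0, hb1]; ring
    have e1 : (Real.cos t * u 0 + Real.sin t * u 1 < Real.cos t * v 0 + Real.sin t * v 1) ↔
        Real.cos t * a0 + Real.sin t * a1 < 0 := by rw [hAe, sub_neg]
    have e2 : (Real.cos t * w 0 + Real.sin t * w 1 < Real.cos t * v 0 + Real.sin t * v 1) ↔
        Real.cos t * b0 + Real.sin t * b1 < 0 := by rw [hBe, sub_neg]
    have e3 : (Real.cos t * u 0 + Real.sin t * u 1 > Real.cos t * v 0 + Real.sin t * v 1) ↔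
        0 < Real.cos t * a0 + Real.sin t * a1 := by rw [gt_iff_lt, ← sub_pos, ← hAe]
    have e4 : (Real.cos t * w 0 + Real.sin t * w 1 > Real.cos t * v 0 + Real.sin t * v 1) ↔
        0 < Real.cos t * b0 + Real.sin t * b1 := by rw [gt_iff_lt, ← sub_pos, ← hBe]
    rw [e1, e2, e3, e4]
    have hprod : (Real.cos t * a0 + Real.sin t * a1) * (Real.cos t * b0 + Real.sin t * b1) =
        (a0 * b0 + a1 * b1) / 2 + r * Real.cos (2 * t - c) := by
      rw [Real.cos_sub, Real.cos_two_mul, Real.sin_two_mul]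
      have hpyth := Real.sin_sq_add_cos_sq t
      have hp' : p = (a0 * b0 - a1 * b1) / 2 := hp
      have hq' : q = (a0 * b1 + a1 * b0) / 2 := hq
      linear_combination (-(2 * Real.cos t ^ 2 - 1)) * hcc + (-(2 * Real.sin t * Real.cos t)) * hss +
        a1 * b1 * hpyth + (-(2 * Real.cos t ^ 2 - 1)) * hp' + (-(2 * Real.sin t * Real.cos t)) * hq'
    have hiff : ((Real.cos t * a0 + Real.sin t * a1 < 0 ∧ Real.cos t * b0 + Real.sin t * b1 < 0) ∨
          (0 < Real.cos t * a0 + Real.sin t * a1 ∧ 0 < Real.cos t * b0 + Real.sin t * b1)) ↔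
        0 < (Real.cos t * a0 + Real.sin t * a1) * (Real.cos t * b0 + Real.sin t * b1) := by
      rw [mul_pos_iff, or_comm]
    rw [hiff, hprod, Real.cos_pi_sub]
    have hca : Real.cos α = (a0 * b0 + a1 * b1) / (2 * r) :=
      (eq_div_iff (by positivity)).mpr hcosα
    rw [hca, ← neg_div, div_lt_iff₀ (by positivity : (0:ℝ) < 2 * r)]
    have hmm : Real.cos (2 * t - c) * (2 * r) = 2 * (r * Real.cos (2 * t - c)) := by ring
    constructor <;> intro h' <;> linarith [hmm]
  rw [hseteq, ← hα]
  exact aux_key (π - α) c (by rw [hα]; linarith [EuclideanGeometry.angle_le_pi u v w])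
    (by rw [hα]; linarith [EuclideanGeometry.angle_nonneg u v w])
end

section
/- Fix a positive integer n and let S = {3k + 2 : 0 ≤ k ≤ n − 1} = {2, 5, 8, …, 3n − 1}. There exists ε > 0 such that, defining for each i ∈ S the points v_{i−1} = (i−1, i−1), v_i = (i, i + 1/(2i) + ε), and v_{i+1} = (i+1, i+1 + 1/i) in ℝ², the observing cones O_i := {s ∈ S¹ : (s·v_{i−1} < s·v_i and s·v_{i+1} < s·v_i) or (s·v_{i−1} > s·v_i and s·v_{i+1} > s·v_i)} satisfy: (1) O_i is nonempty for every i ∈ S, and (2) O_i ∩ O_j = ∅ for all distinct i, j ∈ S. -/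
/-- Dot product of a direction with a point in the plane. -/
def dotP (s p : ℝ × ℝ) : ℝ := s.1 * p.1 + s.2 * p.2

/-- Base vertex `v_{i-1} = (i-1, i-1)`. -/
def vPrev (i : ℝ) : ℝ × ℝ := (i - 1, i - 1)

/-- Apex vertex `v_i = (i, i + 1/(2i) + ε)`. -/
noncomputable def vApex (i ε : ℝ) : ℝ × ℝ := (i, i + 1 / (2 * i) + ε)

/-- Base vertex `v_{i+1} = (i+1, i+1+1/i)`. -/
noncomputable def vNext (i : ℝ) : ℝ × ℝ := (i + 1, i + 1 + 1 / i)

/-- The observing cone of the apex vertex `v_i`: unit directions seeing `v_i`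
as a strict local maximum or strict local minimum among its neighbors. -/
def obsCone (i ε : ℝ) : Set (ℝ × ℝ) :=
  {s | s.1 ^ 2 + s.2 ^ 2 = 1 ∧
    ((dotP s (vPrev i) < dotP s (vApex i ε) ∧ dotP s (vNext i) < dotP s (vApex i ε)) ∨
     (dotP s (vPrev i) > dotP s (vApex i ε) ∧ dotP s (vNext i) > dotP s (vApex i ε)))}

/-- Difference of dot products with apex and previous vertex. -/
lemma diff_prev (s : ℝ × ℝ) (i ε : ℝ) :
    dotP s (vApex i ε) - dotP s (vPrev i) = s.1 + s.2 * (1 + 1 / (2 * i) + ε) := by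
  simp only [dotP, vApex, vPrev]; ring

lemma diff_next (s : ℝ × ℝ) (i ε : ℝ) :
    dotP s (vNext i) - dotP s (vApex i ε) = s.1 + s.2 * (1 + 1 / (2 * i) - ε) := by
  simp only [dotP, vApex, vNext]; ring

/-- Key structural fact about membership in an observing cone. -/
lemma mem_obsCone_abs {i ε : ℝ} (hε : 0 < ε) {s : ℝ × ℝ}
    (hs : s ∈ obsCone i ε) :
    s.2 ≠ 0 ∧ |s.1 + s.2 * (1 + 1 / (2 * i))| < |s.2| * ε := by
  have e1 := diff_prev s i ε
  have e2 := diff_next s i ε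
  obtain ⟨-, ⟨h1, h2⟩ | ⟨h1, h2⟩⟩ := hs
  · -- local max: s.2 > 0
    have hb : 0 < s.2 := by nlinarith
    refine ⟨ne_of_gt hb, ?_⟩
    rw [abs_of_pos hb, abs_lt]
    constructor <;> nlinarith
  · have hb : s.2 < 0 := by nlinarith
    refine ⟨ne_of_lt hb, ?_⟩
    rw [abs_of_neg hb, abs_lt]
    constructor <;> nlinarith

/-- The gap between `1/(2y)` and `1/(2x)` when `y + 3 ≤ x ≤ 3N`. -/
lemma gap_lemma (N x y : ℝ) (hN : 0 < N) (h2 : 2 ≤ y) (hxN : x ≤ 3 * N)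
    (hyN : y ≤ 3 * N) (hd : y + 3 ≤ x) :
    2 * (1 / (18 * N ^ 2)) ≤ 1 / (2 * y) - 1 / (2 * x) := by
  have hx : 0 < x := by linarith
  have hy : 0 < y := by linarith
  have heq : 1 / (2 * y) - 1 / (2 * x) = (x - y) / (2 * x * y) := by
    field_simp
  rw [heq, le_div_iff₀ (by positivity)]
  have hxy : x * y ≤ 9 * N ^ 2 := by nlinarith
  have ht : (0:ℝ) ≤ 1 / (18 * N ^ 2) := by positivity
  have hone : 18 * N ^ 2 * (1 / (18 * N ^ 2)) = 1 := by field_simp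
  nlinarith [mul_le_mul_of_nonneg_right hxy ht]

/-- **Linear Size Descriptor Set** (geometric core): for the construction with
apex vertices `v_i`, `i ∈ S = {2, 5, …, 3n-1}`, there is an `ε > 0` making all
observing cones nonempty and pairwise disjoint. -/
theorem exists_eps_obsCones_nonempty_pairwise_disjoint (n : ℕ) (hn : 0 < n) :
    ∃ ε > (0 : ℝ),
      (∀ i ∈ ((Finset.range n).image (fun k => 3 * k + 2) : Finset ℕ),
        (obsCone (i : ℝ) ε).Nonempty) ∧
      (∀ i ∈ ((Finset.range n).image (fun k => 3 * k + 2) : Finset ℕ),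
       ∀ j ∈ ((Finset.range n).image (fun k => 3 * k + 2) : Finset ℕ),
        i ≠ j → Disjoint (obsCone (i : ℝ) ε) (obsCone (j : ℝ) ε)) := by
  have hn' : (0 : ℝ) < n := by exact_mod_cast hn
  set ε : ℝ := 1 / (18 * (n : ℝ) ^ 2) with hεdef
  have hε : 0 < ε := by positivity
  refine ⟨ε, hε, ?_, ?_⟩
  · -- nonemptiness
    intro i hi
    simp only [Finset.mem_image, Finset.mem_range] at hi
    obtain ⟨k, hk, rfl⟩ := hi
    set ir : ℝ := ((3 * k + 2 : ℕ) : ℝ) with hir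
    have hipos : (0 : ℝ) < ir := by positivity
    set m : ℝ := 1 + 1 / (2 * ir) with hm
    set r : ℝ := Real.sqrt (m ^ 2 + 1) with hr
    have hr0 : 0 < r := Real.sqrt_pos.mpr (by positivity)
    have hrsq : r ^ 2 = m ^ 2 + 1 := Real.sq_sqrt (by positivity)
    refine ⟨(-m / r, 1 / r), ?_, Or.inl ⟨?_, ?_⟩⟩
    · field_simp
      nlinarith
    · have := diff_prev (-m / r, 1 / r) ir ε
      have hkey : (-m / r, 1 / r).1 + (-m / r, 1 / r).2 * (1 + 1 / (2 * ir) + ε) = ε / r := by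
        simp only [hm]; field_simp; ring
      linarith [div_pos hε hr0, this, hkey]
    · have := diff_next (-m / r, 1 / r) ir ε
      have hkey : (-m / r, 1 / r).1 + (-m / r, 1 / r).2 * (1 + 1 / (2 * ir) - ε) = -(ε / r) := by
        simp only [hm]; field_simp; ring
      have : dotP (-m / r, 1 / r) (vNext ir) - dotP (-m / r, 1 / r) (vApex ir ε) = -(ε / r) := by
        rw [diff_next]; exact hkey
      linarith [div_pos hε hr0, this]
  · -- disjointness
    intro i hi j hj hij
    simp only [Finset.mem_image, Finset.mem_range] at hi hj
    obtain ⟨k, hk, rfl⟩ := hi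
    obtain ⟨l, hl, rfl⟩ := hj
    rw [Set.disjoint_left]
    intro s hsi hsj
    obtain ⟨hb, habs_i⟩ := mem_obsCone_abs hε hsi
    obtain ⟨-, habs_j⟩ := mem_obsCone_abs hε hsj
    set ir : ℝ := ((3 * k + 2 : ℕ) : ℝ) with hir
    set jr : ℝ := ((3 * l + 2 : ℕ) : ℝ) with hjr
    have hb' : 0 < |s.2| := abs_pos.mpr hb
    -- |m_i - m_j| < 2 ε
    have hlt : |1 / (2 * ir) - 1 / (2 * jr)| < 2 * ε := by
      have h1 : |s.2| * |1 / (2 * ir) - 1 / (2 * jr)| =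
          |(s.1 + s.2 * (1 + 1 / (2 * ir))) - (s.1 + s.2 * (1 + 1 / (2 * jr)))| := by
        rw [← abs_mul]; ring_nf
      have h2 : |(s.1 + s.2 * (1 + 1 / (2 * ir))) - (s.1 + s.2 * (1 + 1 / (2 * jr)))| ≤
          |s.1 + s.2 * (1 + 1 / (2 * ir))| + |s.1 + s.2 * (1 + 1 / (2 * jr))| :=
        abs_sub _ _
      have h3 : |s.2| * |1 / (2 * ir) - 1 / (2 * jr)| < |s.2| * (2 * ε) := by
        rw [h1]; calc _ ≤ _ := h2
          _ < |s.2| * ε + |s.2| * ε := by linarith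
          _ = |s.2| * (2 * ε) := by ring
      exact lt_of_mul_lt_mul_left h3 (le_of_lt hb')
    -- but the gap is at least 2 ε
    have hgap : 2 * ε ≤ |1 / (2 * ir) - 1 / (2 * jr)| := by
      have hkl : k ≠ l := fun h => hij (by rw [h])
      have hi2 : (2 : ℝ) ≤ ir := by
        simp only [hir]; push_cast; linarith [Nat.cast_nonneg (α := ℝ) k]
      have hj2 : (2 : ℝ) ≤ jr := by
        simp only [hjr]; push_cast; linarith [Nat.cast_nonneg (α := ℝ) l]
      have hin : ir ≤ 3 * (n : ℝ) := by
        have : (k : ℝ) + 1 ≤ (n : ℝ) := by exact_mod_cast hk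
        simp only [hir]; push_cast; linarith
      have hjn : jr ≤ 3 * (n : ℝ) := by
        have : (l : ℝ) + 1 ≤ (n : ℝ) := by exact_mod_cast hl
        simp only [hjr]; push_cast; linarith
      rcases lt_or_gt_of_ne hkl with h | h
      · have hd : ir + 3 ≤ jr := by
          have : (k : ℝ) + 1 ≤ (l : ℝ) := by exact_mod_cast h
          simp only [hir, hjr]; push_cast; linarith
        have := gap_lemma (n : ℝ) jr ir hn' hi2 hjn hin hd
        have hpos : 0 ≤ 1 / (2 * ir) - 1 / (2 * jr) := by linarith
        rw [abs_of_nonneg hpos, hεdef]; linarith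
      · have hd : jr + 3 ≤ ir := by
          have : (l : ℝ) + 1 ≤ (k : ℝ) := by exact_mod_cast h
          simp only [hir, hjr]; push_cast; linarith
        have := gap_lemma (n : ℝ) ir jr hn' hj2 hin hjn hd
        have hneg : 1 / (2 * ir) - 1 / (2 * jr) ≤ 0 := by linarith
        rw [abs_of_nonpos hneg, hεdef]; linarith
    linarith
end

section
/- Let E be a real inner product space (e.g., Euclidean space ℝ^d) and let u, v, w ∈ E satisfy dist(u, v) = dist(w, v). Then the Hausdorff distance between the set segment[u, v] ∪ segment[v, w] (the two legs of the isosceles triangle) and the set segment[u, w] (the base) equals dist(v, midpoint(u, w)). -/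
open Metric RealInnerProductSpace

lemma isosceles_orth {E : Type*} [NormedAddCommGroup E] [InnerProductSpace ℝ E]
    (u v w : E) (h : dist u v = dist w v) :
    ⟪v - midpoint ℝ u w, u - w⟫ = 0 := by
  have h' : ‖u - v‖ = ‖w - v‖ := by simpa [dist_eq_norm] using h
  have h2 : ‖u - v‖^2 = ‖w - v‖^2 := by rw [h']
  rw [@norm_sub_sq_real, @norm_sub_sq_real] at h2
  have hu : ‖u‖^2 = ⟪u, u⟫ := (real_inner_self_eq_norm_sq u).symm
  have hw : ‖w‖^2 = ⟪w, w⟫ := (real_inner_self_eq_norm_sq w).symm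
  rw [hu, hw] at h2
  rw [midpoint_eq_smul_add]
  simp only [inner_sub_left, inner_sub_right, real_inner_smul_left, inner_add_left,
    real_inner_comm u v, real_inner_comm w v, real_inner_comm w u]
  simp only [invOf_eq_inv]
  linarith

-- the midpoint minimizes distance from v to the base
lemma isosceles_infDist {E : Type*} [NormedAddCommGroup E] [InnerProductSpace ℝ E]
    (u v w : E) (h : dist u v = dist w v) :
    ∀ x ∈ segment ℝ u w, dist v (midpoint ℝ u w) ≤ dist v x := by
  intro x hx
  obtain ⟨a, b, ha, hb, hab, rfl⟩ := hx
  set m := midpoint ℝ u w with hm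
  have horth := isosceles_orth u v w h
  have hxm : a • u + b • w - m = (a - b) • ((2:ℝ)⁻¹ • (u - w)) := by
    rw [hm, midpoint_eq_smul_add]
    rw [smul_smul]
    rw [show (a - b) * (2:ℝ)⁻¹ = a/2 - b/2 by ring]
    have : b = 1 - a := by linarith
    subst this
    match_scalars <;> (simp only [invOf_eq_inv]; try ring)
  have key : ‖v - (a • u + b • w)‖^2 = ‖v - m‖^2 + ((a-b)/2)^2 * ‖u - w‖^2 := by
    have : v - (a • u + b • w) = (v - m) - ((a-b)/2) • (u - w) := by
      rw [show ((a-b)/2) • (u - w) = (a - b) • ((2:ℝ)⁻¹ • (u - w)) by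
        rw [smul_smul]; ring_nf]
      rw [← hxm]; abel
    rw [this, @norm_sub_sq_real, real_inner_smul_right, horth, norm_smul]
    simp only [mul_zero, sub_zero, Real.norm_eq_abs, mul_pow, sq_abs]
  rw [dist_eq_norm, dist_eq_norm]
  nlinarith [norm_nonneg (v - (a • u + b • w)), norm_nonneg (v - m), sq_nonneg (((a-b)/2)) , sq_nonneg (‖u-w‖), mul_nonneg (sq_nonneg ((a-b)/2)) (sq_nonneg ‖u-w‖)]

lemma isBounded_seg {E : Type*} [NormedAddCommGroup E] [InnerProductSpace ℝ E]
    (x y : E) : Bornology.IsBounded (segment ℝ x y) := by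
  have : IsCompact (segment ℝ x y) := by
    rw [segment_eq_image]
    exact isCompact_Icc.image <| ((continuous_const.sub continuous_id).smul
      continuous_const).add (continuous_id.smul continuous_const)
  exact this.isBounded

/-- **Lost Vertex** (set-level content): for an isosceles configuration
`dist u v = dist w v`, the Hausdorff distance between the two legs
`segment[u,v] ∪ segment[v,w]` and the base `segment[u,w]` equals the distance
from the apex `v` to the midpoint of `u` and `w`. -/
theorem hausdorffDist_legs_base
    {E : Type*} [NormedAddCommGroup E] [InnerProductSpace ℝ E]
    (u v w : E) (h : dist u v = dist w v) :
    hausdorffDist (segment ℝ u v ∪ segment ℝ v w) (segment ℝ u w) =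
      dist v (midpoint ℝ u w) := by
  set m := midpoint ℝ u w with hm
  set d := dist v m with hd
  have hd0 : 0 ≤ d := dist_nonneg
  have hmem_m : m ∈ segment ℝ u w := midpoint_mem_segment u w
  -- upper bound
  have hub : hausdorffDist (segment ℝ u v ∪ segment ℝ v w) (segment ℝ u w) ≤ d := by
    apply hausdorffDist_le_of_mem_dist hd0
    · rintro x (hx | hx)
      · obtain ⟨a, b, ha, hb, hab, rfl⟩ := hx
        refine ⟨a • u + b • m, ?_, ?_⟩
        · exact (convex_segment u w).segment_subset (left_mem_segment ℝ u w) hmem_m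
            ⟨a, b, ha, hb, hab, rfl⟩
        · have : a • u + b • v - (a • u + b • m) = b • (v - m) := by
            rw [smul_sub]; abel
          rw [dist_eq_norm, this, norm_smul, Real.norm_eq_abs, abs_of_nonneg hb]
          calc b * ‖v - m‖ ≤ 1 * ‖v - m‖ := by
                apply mul_le_mul_of_nonneg_right (by linarith) (norm_nonneg _)
            _ = d := by rw [one_mul, hd, dist_eq_norm]
      · obtain ⟨a, b, ha, hb, hab, rfl⟩ := hx
        refine ⟨b • w + a • m, ?_, ?_⟩
        · exact (convex_segment u w).segment_subset (right_mem_segment ℝ u w) hmem_m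
            ⟨b, a, hb, ha, by linarith, by rw [add_comm]⟩
        · have : a • v + b • w - (b • w + a • m) = a • (v - m) := by
            rw [smul_sub]; abel
          rw [dist_eq_norm, this, norm_smul, Real.norm_eq_abs, abs_of_nonneg ha]
          calc a * ‖v - m‖ ≤ 1 * ‖v - m‖ := by
                apply mul_le_mul_of_nonneg_right (by linarith) (norm_nonneg _)
            _ = d := by rw [one_mul, hd, dist_eq_norm]
    · rintro y ⟨a, b, ha, hb, hab, rfl⟩
      rcases le_total b (1/2 : ℝ) with hb2 | hb2
      · refine ⟨(a - b) • u + (2*b) • v, Or.inl ⟨a - b, 2*b, by linarith, by linarith,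
          by linarith, rfl⟩, ?_⟩
        have : (a - b) • u + (2*b) • v - (a • u + b • w) = (2*b) • (v - m) := by
          rw [hm, midpoint_eq_smul_add, smul_sub, smul_smul]
          match_scalars <;> (simp only [invOf_eq_inv]; try ring)
        rw [dist_eq_norm, norm_sub_rev, this, norm_smul, Real.norm_eq_abs,
          abs_of_nonneg (by linarith : (0:ℝ) ≤ 2*b)]
        calc 2*b * ‖v - m‖ ≤ 1 * ‖v - m‖ := by
              apply mul_le_mul_of_nonneg_right (by linarith) (norm_nonneg _)
          _ = d := by rw [one_mul, hd, dist_eq_norm]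
      · refine ⟨(2*a) • v + (b - a) • w, Or.inr ⟨2*a, b - a, by linarith, by linarith,
          by linarith, rfl⟩, ?_⟩
        have : (2*a) • v + (b - a) • w - (a • u + b • w) = (2*a) • (v - m) := by
          rw [hm, midpoint_eq_smul_add, smul_sub, smul_smul]
          match_scalars <;> (simp only [invOf_eq_inv]; try ring)
        rw [dist_eq_norm, norm_sub_rev, this, norm_smul, Real.norm_eq_abs,
          abs_of_nonneg (by linarith : (0:ℝ) ≤ 2*a)]
        calc 2*a * ‖v - m‖ ≤ 1 * ‖v - m‖ := by
              apply mul_le_mul_of_nonneg_right (by linarith) (norm_nonneg _)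
          _ = d := by rw [one_mul, hd, dist_eq_norm]
  -- lower bound
  have hne : EMetric.hausdorffEdist (segment ℝ u v ∪ segment ℝ v w) (segment ℝ u w) ≠ ⊤ := by
    apply hausdorffEdist_ne_top_of_nonempty_of_bounded
    · exact Set.Nonempty.inl ⟨u, left_mem_segment ℝ u v⟩
    · exact ⟨u, left_mem_segment ℝ u w⟩
    · exact (isBounded_seg u v).union (isBounded_seg v w)
    · exact isBounded_seg u w
  have hlb : d ≤ hausdorffDist (segment ℝ u v ∪ segment ℝ v w) (segment ℝ u w) := by
    have hv : v ∈ segment ℝ u v ∪ segment ℝ v w := Or.inl (right_mem_segment ℝ u v)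
    have h1 : d ≤ infDist v (segment ℝ u w) := by
      rw [infDist_eq_iInf]
      have : Nonempty (segment ℝ u w) := ⟨⟨u, left_mem_segment ℝ u w⟩⟩
      exact le_ciInf fun y => isosceles_infDist u v w h y y.2
    exact h1.trans (infDist_le_hausdorffDist_of_mem hv hne)
  linarith
end

section
/- Let u, w ∈ ℝ² be fixed distinct points. For every η > 0 there exists δ > 0 such that for every point v ∈ ℝ² with u − v and w − v linearly independent and ∠uvw > π − δ, the Lebesgue measure of the set {t ∈ [0, 2π) : the direction s = (cos t, sin t) satisfies (s·u < s·v and s·w < s·v) or (s·u > s·v and s·w > s·v)} is less than η. That is, the angular measure of the observing region of a degree-two vertex v tends to 0 as v approaches the line spanned by its two adjacent vertices. -/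
open Real MeasureTheory

lemma cos_lt_imp_near_int (ε x : ℝ) (hε0 : 0 ≤ ε) (hεπ : ε ≤ π)
    (h : Real.cos ε < Real.cos x) : ∃ k : ℤ, |x - 2 * π * k| < ε := by
  refine ⟨round (x / (2 * π)), ?_⟩
  set k := round (x / (2 * π)) with hk
  have hπ : (0:ℝ) < π := Real.pi_pos
  have h2π : (0:ℝ) < 2 * π := by positivity
  have h1 : |x / (2 * π) - k| ≤ 1/2 := abs_sub_round _
  have hy : |x - 2 * π * k| ≤ π := by
    have he : x - 2 * π * k = (x / (2*π) - k) * (2*π) := by field_simp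
    rw [he, abs_mul, abs_of_pos h2π]
    nlinarith [h1]
  have hcos : Real.cos (x - 2 * π * k) = Real.cos x := by
    have := Real.cos_sub_int_mul_two_pi x k
    rw [← this]
    ring_nf
  by_contra hcon
  push_neg at hcon
  have h1 : Real.cos |x - 2*π*k| ≤ Real.cos ε :=
    Real.cos_le_cos_of_nonneg_of_le_pi hε0 hy hcon
  rw [Real.cos_abs, hcos] at h1
  linarith

lemma vol_cover_le (α β ε : ℝ) :
    volume (⋃ k ∈ Finset.Icc (-1 : ℤ) 3,
      Set.Ioo ((α + β + 2*π*k - ε)/2) ((α + β + 2*π*k + ε)/2)) ≤ ENNReal.ofReal (5 * ε) := by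
  calc volume (⋃ k ∈ Finset.Icc (-1 : ℤ) 3,
          Set.Ioo ((α + β + 2*π*k - ε)/2) ((α + β + 2*π*k + ε)/2))
      ≤ ∑ k ∈ Finset.Icc (-1 : ℤ) 3,
          volume (Set.Ioo ((α + β + 2*π*k - ε)/2) ((α + β + 2*π*k + ε)/2)) :=
        measure_biUnion_finset_le _ _
    _ = ∑ k ∈ Finset.Icc (-1 : ℤ) 3, ENNReal.ofReal ε := by
        refine Finset.sum_congr rfl fun k _ => ?_
        rw [Real.volume_Ioo]
        congr 1
        ring
    _ = 5 * ENNReal.ofReal ε := by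
        rw [Finset.sum_const, nsmul_eq_mul]
        norm_num
        rfl
    _ = ENNReal.ofReal (5 * ε) := by
        rw [ENNReal.ofReal_mul (by norm_num : (0:ℝ) ≤ 5)]
        norm_num

set_option maxHeartbeats 1000000 in
/-- The angular measure of the observing region of a degree-two vertex `v`
with fixed neighbors `u` and `w` tends to `0` as `v` approaches the line
through `u` and `w` (i.e. as `∠uvw → π`). -/
theorem observing_region_measure_small_of_flat
    (u w : EuclideanSpace ℝ (Fin 2)) (huw : u ≠ w) :
    ∀ η : ℝ, 0 < η → ∃ δ : ℝ, 0 < δ ∧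
      ∀ v : EuclideanSpace ℝ (Fin 2),
        LinearIndependent ℝ ![u - v, w - v] →
        π - δ < EuclideanGeometry.angle u v w →
        volume {t : ℝ | t ∈ Set.Ico 0 (2 * π) ∧
            ((Real.cos t * u 0 + Real.sin t * u 1 < Real.cos t * v 0 + Real.sin t * v 1 ∧
              Real.cos t * w 0 + Real.sin t * w 1 < Real.cos t * v 0 + Real.sin t * v 1) ∨
             (Real.cos t * u 0 + Real.sin t * u 1 > Real.cos t * v 0 + Real.sin t * v 1 ∧
              Real.cos t * w 0 + Real.sin t * w 1 > Real.cos t * v 0 + Real.sin t * v 1))} <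
          ENNReal.ofReal η := by
  intro η hη
  refine ⟨η / 6, by positivity, ?_⟩
  intro v hli hangle
  have hπ : (0:ℝ) < π := Real.pi_pos
  have h2π : (0:ℝ) < 2 * π := by positivity
  set a : EuclideanSpace ℝ (Fin 2) := u - v with ha_def
  set b : EuclideanSpace ℝ (Fin 2) := w - v with hb_def
  have ha : a ≠ 0 := by
    have := hli.ne_zero 0; simpa [ha_def] using this
  have hb : b ≠ 0 := by
    have := hli.ne_zero 1; simpa [hb_def] using this
  set za : ℂ := ⟨a 0, a 1⟩ with hza_def
  set zb : ℂ := ⟨b 0, b 1⟩ with hzb_def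
  have hza : za ≠ 0 := by
    intro h
    apply ha
    have h0 : a 0 = 0 := by rw [← Complex.zero_re, ← h]
    have h1 : a 1 = 0 := by rw [← Complex.zero_im, ← h]
    ext i
    fin_cases i <;> simpa
  have hzb : zb ≠ 0 := by
    intro h
    apply hb
    have h0 : b 0 = 0 := by rw [← Complex.zero_re, ← h]
    have h1 : b 1 = 0 := by rw [← Complex.zero_im, ← h]
    ext i
    fin_cases i <;> simpa
  set α := Complex.arg za with hα_def
  set β := Complex.arg zb with hβ_def
  set ra := ‖za‖ with hra_def
  set rb := ‖zb‖ with hrb_def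
  have hra : 0 < ra := norm_pos_iff.mpr hza
  have hrb : 0 < rb := norm_pos_iff.mpr hzb
  have ha0 : ra * Real.cos α = a 0 := Complex.norm_mul_cos_arg za
  have ha1 : ra * Real.sin α = a 1 := Complex.norm_mul_sin_arg za
  have hb0 : rb * Real.cos β = b 0 := Complex.norm_mul_cos_arg zb
  have hb1 : rb * Real.sin β = b 1 := Complex.norm_mul_sin_arg zb
  have hna : ‖a‖ = ra := by
    simp [hra_def, hza_def, EuclideanSpace.norm_eq, Fin.sum_univ_two, Complex.norm_def,
      Complex.normSq_mk, Real.norm_eq_abs, sq_abs, sq]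
  have hnb : ‖b‖ = rb := by
    simp [hrb_def, hzb_def, EuclideanSpace.norm_eq, Fin.sum_univ_two, Complex.norm_def,
      Complex.normSq_mk, Real.norm_eq_abs, sq_abs, sq]
  set θ := EuclideanGeometry.angle u v w with hθ_def
  have hθa : θ = InnerProductGeometry.angle a b := by
    rw [hθ_def, EuclideanGeometry.angle, ha_def, hb_def]
    norm_num
  have hinner : (inner ℝ a b : ℝ) = a 0 * b 0 + a 1 * b 1 := by
    simp [PiLp.inner_apply, RCLike.inner_apply, Fin.sum_univ_two]
    ring
  -- cos θ = cos (β - α)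
  have hcosθ : Real.cos θ = Real.cos (β - α) := by
    have hmul := InnerProductGeometry.cos_angle_mul_norm_mul_norm a b
    rw [← hθa, hinner, hna, hnb, ← ha0, ← ha1, ← hb0, ← hb1] at hmul
    have : Real.cos θ * (ra * rb) = Real.cos (β - α) * (ra * rb) := by
      rw [hmul, Real.cos_sub]; ring
    have hrr : ra * rb ≠ 0 := by positivity
    exact mul_right_cancel₀ hrr this
  have hθ_nonneg : 0 ≤ θ := EuclideanGeometry.angle_nonneg u v w
  have hθ_le : θ ≤ π := EuclideanGeometry.angle_le_pi u v w
  set ε := π - θ with hε_def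
  have hε0 : 0 ≤ ε := by linarith
  have hεπ : ε ≤ π := by linarith
  have hεδ : ε < η / 6 := by rw [hε_def]; linarith
  -- the covering family of intervals
  set S : Set ℝ := {t : ℝ | t ∈ Set.Ico 0 (2 * π) ∧
            ((Real.cos t * u 0 + Real.sin t * u 1 < Real.cos t * v 0 + Real.sin t * v 1 ∧
              Real.cos t * w 0 + Real.sin t * w 1 < Real.cos t * v 0 + Real.sin t * v 1) ∨
             (Real.cos t * u 0 + Real.sin t * u 1 > Real.cos t * v 0 + Real.sin t * v 1 ∧
              Real.cos t * w 0 + Real.sin t * w 1 > Real.cos t * v 0 + Real.sin t * v 1))} with hS_def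
  have hsub : S ⊆ ⋃ k ∈ Finset.Icc (-1 : ℤ) 3,
      Set.Ioo ((α + β + 2*π*k - ε)/2) ((α + β + 2*π*k + ε)/2) := by
    intro t ht
    obtain ⟨⟨ht0, ht2⟩, hcond⟩ := ht
    -- p, q
    have hau0 : a 0 = u 0 - v 0 := by simp [ha_def]
    have hau1 : a 1 = u 1 - v 1 := by simp [ha_def]
    have hbw0 : b 0 = w 0 - v 0 := by simp [hb_def]
    have hbw1 : b 1 = w 1 - v 1 := by simp [hb_def]
    have hp : Real.cos t * u 0 + Real.sin t * u 1 - (Real.cos t * v 0 + Real.sin t * v 1)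
        = ra * Real.cos (t - α) := by
      rw [Real.cos_sub]
      have : Real.cos t * u 0 + Real.sin t * u 1 - (Real.cos t * v 0 + Real.sin t * v 1)
          = Real.cos t * (ra * Real.cos α) + Real.sin t * (ra * Real.sin α) := by
        rw [ha0, ha1, hau0, hau1]; ring
      rw [this]; ring
    have hq : Real.cos t * w 0 + Real.sin t * w 1 - (Real.cos t * v 0 + Real.sin t * v 1)
        = rb * Real.cos (t - β) := by
      rw [Real.cos_sub]
      have : Real.cos t * w 0 + Real.sin t * w 1 - (Real.cos t * v 0 + Real.sin t * v 1)
          = Real.cos t * (rb * Real.cos β) + Real.sin t * (rb * Real.sin β) := by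
        rw [hb0, hb1, hbw0, hbw1]; ring
      rw [this]; ring
    have hpq : 0 < (ra * Real.cos (t - α)) * (rb * Real.cos (t - β)) := by
      rcases hcond with ⟨h1, h2⟩ | ⟨h1, h2⟩
      · have hp' : ra * Real.cos (t - α) < 0 := by rw [← hp]; linarith
        have hq' : rb * Real.cos (t - β) < 0 := by rw [← hq]; linarith
        exact mul_pos_of_neg_of_neg hp' hq'
      · have hp' : 0 < ra * Real.cos (t - α) := by rw [← hp]; linarith
        have hq' : 0 < rb * Real.cos (t - β) := by rw [← hq]; linarith
        exact mul_pos hp' hq'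
    have hcc : 0 < Real.cos (t - α) * Real.cos (t - β) := by
      rcases mul_pos_iff.mp hpq with ⟨h1, h2⟩ | ⟨h1, h2⟩
      · have hX : 0 < Real.cos (t - α) := by nlinarith
        have hY : 0 < Real.cos (t - β) := by nlinarith
        exact mul_pos hX hY
      · have hX : Real.cos (t - α) < 0 := by nlinarith
        have hY : Real.cos (t - β) < 0 := by nlinarith
        exact mul_pos_of_neg_of_neg hX hY
    have hkey : Real.cos (β - α) + Real.cos (2*t - α - β)
        = 2 * (Real.cos (t - α) * Real.cos (t - β)) := by
      have e1 : β - α = (t - α) - (t - β) := by ring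
      have e2 : 2*t - α - β = (t - α) + (t - β) := by ring
      rw [e1, e2, Real.cos_sub, Real.cos_add]; ring
    have hgt : Real.cos ε < Real.cos (2*t - α - β) := by
      rw [hε_def, Real.cos_pi_sub, hcosθ]
      linarith
    obtain ⟨k, hk⟩ := cos_lt_imp_near_int ε (2*t - α - β) hε0 hεπ hgt
    rw [abs_lt] at hk
    -- bounds on k
    have hαl : -π < α := Complex.neg_pi_lt_arg za
    have hαu : α ≤ π := Complex.arg_le_pi za
    have hβl : -π < β := Complex.neg_pi_lt_arg zb
    have hβu : β ≤ π := Complex.arg_le_pi zb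
    have hklb : (-1 : ℤ) ≤ k := by
      by_contra hcon
      push_neg at hcon
      have h2 : k ≤ -2 := by omega
      have h2' : (k : ℝ) ≤ -2 := by exact_mod_cast h2
      have h3 : 2*π*(k:ℝ) ≤ 2*π*(-2) :=
        mul_le_mul_of_nonneg_left h2' (le_of_lt h2π)
      linarith [hk.1, hk.2]
    have hkub : k ≤ (3 : ℤ) := by
      by_contra hcon
      push_neg at hcon
      have h2 : (4:ℤ) ≤ k := by omega
      have h2' : (4 : ℝ) ≤ (k:ℝ) := by exact_mod_cast h2
      have h3 : 2*π*(4:ℝ) ≤ 2*π*(k:ℝ) :=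
        mul_le_mul_of_nonneg_left h2' (le_of_lt h2π)
      linarith [hk.1, hk.2]
    refine Set.mem_iUnion₂.mpr ⟨k, Finset.mem_Icc.mpr ⟨hklb, hkub⟩, ?_, ?_⟩
    · linarith [hk.1]
    · linarith [hk.2]
  calc volume S ≤ volume (⋃ k ∈ Finset.Icc (-1 : ℤ) 3,
          Set.Ioo ((α + β + 2*π*k - ε)/2) ((α + β + 2*π*k + ε)/2)) := measure_mono hsub
    _ ≤ ENNReal.ofReal (5 * ε) := vol_cover_le α β ε
    _ < ENNReal.ofReal η := by
        rw [ENNReal.ofReal_lt_ofReal_iff hη]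
        linarith
end
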